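/- arXiv:1104.3316 — 2 statements merged into one kernel-verified Lean document; each statement's English description precedes it below -/
import Mathlib

section
/- There is a bijection between irreducible RNA secondary structures of length n and arbitrary RNA secondary structures of length n−2, for all n ≥ 3, given on tableaux by deleting λ_1 and λ_{n-1} and removing one square from each intermediate shape. -/
open Finset Filter Topology Asymptotics

/-- An RNA secondary structure of length `n`: a set of arcs `(i,j)`, `1 ≤ i < j ≤ n`,
which form a partial matching (no shared endpoints), are noncrossing, and contain
no 1-arc `(i,i+1)`. -/
def IsSecStr (n : ℕ) (A : Finset (ℕ × ℕ)) : Prop :=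
  (∀ p ∈ A, 1 ≤ p.1 ∧ p.1 < p.2 ∧ p.2 ≤ n ∧ p.2 ≠ p.1 + 1) ∧
  (∀ p ∈ A, ∀ q ∈ A, p ≠ q →
    p.1 ≠ q.1 ∧ p.1 ≠ q.2 ∧ p.2 ≠ q.1 ∧ p.2 ≠ q.2) ∧
  (∀ p ∈ A, ∀ q ∈ A, ¬ (p.1 < q.1 ∧ q.1 < p.2 ∧ p.2 < q.2))

/-- `s(n)`: the number of RNA secondary structures of length `n`. -/
noncomputable def secCount (n : ℕ) : ℕ :=
  Nat.card {A : Finset (ℕ × ℕ) // IsSecStr n A}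

/-- The diagram graph of a secondary structure: backbone edges `(i,i+1)` together
with the arcs, on vertices `1,…,n`. -/
def diagGraph (n : ℕ) (A : Finset (ℕ × ℕ)) : SimpleGraph ℕ where
  Adj i j := i ≠ j ∧ 1 ≤ i ∧ i ≤ n ∧ 1 ≤ j ∧ j ≤ n ∧
    (j = i + 1 ∨ i = j + 1 ∨ (i, j) ∈ A ∨ (j, i) ∈ A)
  symm := by
    refine ⟨?_⟩
    rintro i j ⟨h1, h2, h3, h4, h5, h6⟩
    exact ⟨h1.symm, h4, h5, h2, h3, by tauto⟩
  loopless := by refine ⟨?_⟩; rintro i ⟨h1, _⟩; exact h1 rfl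

/-- The 5'-3' distance of a secondary structure: the graph distance from
vertex `1` to vertex `n` in its diagram. -/
noncomputable def secDist (n : ℕ) (A : Finset (ℕ × ℕ)) : ℕ :=
  (diagGraph n A).dist 1 n

/-- `w(n,d)`: the number of secondary structures of length `n` with 5'-3' distance `d`. -/
noncomputable def wCount (n d : ℕ) : ℕ :=
  Nat.card {A : Finset (ℕ × ℕ) // IsSecStr n A ∧ secDist n A = d}

/-- The dominant singularity `ρ = (3 − √5)/2`. -/
noncomputable def rho : ℝ := (3 - Real.sqrt 5) / 2

/-- The generating function of RNA secondary structures, in closed form. -/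
noncomputable def Sfun (z : ℝ) : ℝ :=
  (1 - z + z ^ 2 - Real.sqrt ((z ^ 2 + z + 1) * (z ^ 2 - 3 * z + 1))) / (2 * z ^ 2)

/-- The bivariate generating function `W(z,u)`, in closed form. -/
noncomputable def Wfun (z u : ℝ) : ℝ :=
  u * z ^ 2 * (Sfun z - 1) /
    ((1 - z * u) ^ 2 - (1 - z * u) * (z * u) ^ 2 * (Sfun z - 1)) + z / (1 - z * u)

/-- `cov A j`: the number of arcs of `A` covering the gap between vertices `j` and `j+1`
(equivalently, the size of the shape of the associated 1-tableau at that gap). -/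
def cov (A : Finset (ℕ × ℕ)) (j : ℕ) : ℕ :=
  (A.filter (fun p => p.1 ≤ j ∧ j < p.2)).card

/-- An irreducible secondary structure: the associated tableau never returns to the
empty shape strictly between the two ends, i.e. every interior gap is covered by an arc. -/
def IsIrr (n : ℕ) (A : Finset (ℕ × ℕ)) : Prop :=
  IsSecStr n A ∧ 2 ≤ n ∧ ∀ j, 1 ≤ j → j ≤ n - 1 → 1 ≤ cov A j

/-- `i(n)`: the number of irreducible secondary structures of length `n`. -/
noncomputable def irrCount (n : ℕ) : ℕ :=
  Nat.card {A : Finset (ℕ × ℕ) // IsIrr n A}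

/-! An irreducible structure on `[n]`, `n ≥ 3`, contains the arc `(1, n)`: the arc covering the
first gap starts at `1`, and if it ended at some `e < n`, the arc covering gap `e` would cross it or
share an endpoint with it. All other arcs therefore lie in `[2, n - 1]`. On arc sets, `γ` deletes
`(1, n)` and shifts the remaining arcs one step to the left; `γ*` shifts one step to the right and
adds `(1, n)`, which covers every interior gap. -/

/-- The map `γ*`, on arc sets. -/
def addOuterArc (n : ℕ) (B : Finset (ℕ × ℕ)) : Finset (ℕ × ℕ) :=
  insert (1, n) (B.map (addRightEmbedding (1, 1)))

/-- The map `γ`, on arc sets. -/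
noncomputable def removeOuterArc (n : ℕ) (A : Finset (ℕ × ℕ)) : Finset (ℕ × ℕ) :=
  (A.erase (1, n)).preimage (· + (1, 1)) (add_left_injective _).injOn

section

variable {m n j : ℕ} {A B : Finset (ℕ × ℕ)} {q : ℕ × ℕ}

theorem one_le_cov_iff : 1 ≤ cov A j ↔ ∃ p ∈ A, p.1 ≤ j ∧ j < p.2 := by
  simp [cov, Nat.one_le_iff_ne_zero]

theorem IsIrr.outer_mem (hn : 3 ≤ n) (hA : IsIrr n A) : (1, n) ∈ A := by
  obtain ⟨⟨hbound, hmatch, hnc⟩, -, hcov⟩ := hA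
  obtain ⟨⟨a, e⟩, hp, ha, he⟩ := one_le_cov_iff.1 (hcov 1 le_rfl (by omega))
  obtain ⟨ha', -, hen, -⟩ := hbound _ hp
  obtain rfl : a = 1 := by omega
  by_contra hne
  have hen : e < n := lt_of_le_of_ne hen (by rintro rfl; exact hne hp)
  obtain ⟨r, hr, hr1, hr2⟩ := one_le_cov_iff.1 (hcov e (by omega) (by omega))
  have := hmatch r hr _ hp (by rintro rfl; omega)
  have := hnc _ hp r hr
  have := hbound r hr
  omega

theorem IsIrr.inner_bounds (hn : 3 ≤ n) (hA : IsIrr n A) (hq : q ∈ A) (hne : q ≠ (1, n)) :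
    2 ≤ q.1 ∧ q.2 ≤ n - 1 := by
  have := hA.1.2.1 q hq _ (hA.outer_mem hn) hne
  have := hA.1.1 q hq
  omega

theorem mem_addOuterArc : q ∈ addOuterArc n B ↔ q = (1, n) ∨ ∃ p ∈ B, p + (1, 1) = q := by
  simp [addOuterArc]

theorem mem_removeOuterArc : q ∈ removeOuterArc n A ↔ q + (1, 1) ≠ (1, n) ∧ q + (1, 1) ∈ A := by
  simp [removeOuterArc]

theorem addOuterArc_removeOuterArc (hA : IsSecStr n A) (hout : (1, n) ∈ A) :
    addOuterArc n (removeOuterArc n A) = A := by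
  ext q
  simp only [mem_addOuterArc, mem_removeOuterArc]
  constructor
  · rintro (rfl | ⟨p, ⟨-, hp⟩, rfl⟩)
    · exact hout
    · exact hp
  · intro hq
    by_cases hne : q = (1, n)
    · exact .inl hne
    have := hA.1 q hq
    have hq' : (q.1 - 1, q.2 - 1) + (1, 1) = q :=
      Prod.ext (by simp only [Prod.fst_add]; omega) (by simp only [Prod.snd_add]; omega)
    exact .inr ⟨_, ⟨hq' ▸ hne, hq' ▸ hq⟩, hq'⟩

theorem removeOuterArc_addOuterArc (hB : IsSecStr m B) :
    removeOuterArc n (addOuterArc n B) = B := by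
  ext q
  simp only [mem_removeOuterArc, mem_addOuterArc, add_left_inj, exists_eq_right]
  constructor
  · rintro ⟨hne, h | hq⟩
    · exact absurd h hne
    · exact hq
  · intro hq
    have := (hB.1 q hq).1
    refine ⟨fun h => ?_, .inr hq⟩
    simp only [Prod.ext_iff, Prod.fst_add] at h
    omega

theorem IsIrr.isSecStr_removeOuterArc (hn : 3 ≤ n) (hA : IsIrr n A) :
    IsSecStr (n - 2) (removeOuterArc n A) := by
  obtain ⟨hbound, hmatch, hnc⟩ := hA.1
  have shift_mem : ∀ q ∈ removeOuterArc n A, q + (1, 1) ∈ A ∧ 1 ≤ q.1 ∧ q.2 ≤ n - 2 := by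
    intro q hq
    obtain ⟨hne, hq⟩ := mem_removeOuterArc.1 hq
    have := hA.inner_bounds hn hq hne
    simp only [Prod.fst_add, Prod.snd_add] at this
    exact ⟨hq, by omega, by omega⟩
  refine ⟨fun q hq => ?_, fun q hq q' hq' hne => ?_, fun q hq q' hq' => ?_⟩
  · obtain ⟨hq, hq1, hq2⟩ := shift_mem q hq
    have := hbound _ hq
    simp only [Prod.fst_add, Prod.snd_add] at this
    omega
  · simpa using hmatch _ (shift_mem q hq).1 _ (shift_mem q' hq').1 (by simpa using hne)
  · simpa using hnc _ (shift_mem q hq).1 _ (shift_mem q' hq').1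

theorem IsSecStr.isIrr_addOuterArc (hn : 3 ≤ n) (hB : IsSecStr (n - 2) B) :
    IsIrr n (addOuterArc n B) := by
  obtain ⟨hbound, hmatch, hnc⟩ := hB
  refine ⟨⟨fun q hq => ?_, fun q hq q' hq' hne => ?_, fun q hq q' hq' => ?_⟩, by omega,
    fun j hj hjn => one_le_cov_iff.2 ⟨(1, n), mem_addOuterArc.2 (.inl rfl), hj, by omega⟩⟩
  · rcases mem_addOuterArc.1 hq with rfl | ⟨p, hp, rfl⟩
    · simp only [ne_eq]; omega
    · have := hbound p hp
      simp only [Prod.fst_add, Prod.snd_add, ne_eq]; omega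
  · rcases mem_addOuterArc.1 hq with rfl | ⟨p, hp, rfl⟩ <;>
      rcases mem_addOuterArc.1 hq' with rfl | ⟨p', hp', rfl⟩
    · exact absurd rfl hne
    · have := hbound p' hp'
      simp only [Prod.fst_add, Prod.snd_add, ne_eq]; omega
    · have := hbound p hp
      simp only [Prod.fst_add, Prod.snd_add, ne_eq]; omega
    · simpa using hmatch p hp p' hp' (by rintro rfl; exact hne rfl)
  · rcases mem_addOuterArc.1 hq with rfl | ⟨p, hp, rfl⟩ <;>
      rcases mem_addOuterArc.1 hq' with rfl | ⟨p', hp', rfl⟩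
    · simp
    · have := hbound p' hp'
      simp only [Prod.fst_add, Prod.snd_add]; omega
    · simp
    · simpa using hnc p hp p' hp'

end

/-- For `n ≥ 3` there is a bijection between irreducible secondary
structures of length `n` and arbitrary secondary structures of length `n − 2`. -/
theorem irr_equiv_secStr (n : ℕ) (hn : 3 ≤ n) :
    Nonempty ({A : Finset (ℕ × ℕ) // IsIrr n A} ≃
      {A : Finset (ℕ × ℕ) // IsSecStr (n - 2) A}) :=
  ⟨{ toFun := fun A => ⟨removeOuterArc n A, A.2.isSecStr_removeOuterArc hn⟩
     invFun := fun B => ⟨addOuterArc n B, B.2.isIrr_addOuterArc hn⟩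
     left_inv := fun A => Subtype.ext (addOuterArc_removeOuterArc A.2.1 (A.2.outer_mem hn))
     right_inv := fun B => Subtype.ext (removeOuterArc_addOuterArc B.2) }⟩
end

section
/- For u ∈ (0,1), W(z,u) admits a singular expansion at ρ = (3−√5)/2 of the form W(z,u) = C_0(u) + V(ρ,u) + r(ρ,u)·(ρ − z)^{1/2} + O(ρ − z), where r(ρ,u) = −(2/(2 − (3−√5)u)) · (df/dw)|_{w=α} · t(ρ,u) · √(8(3√5−5))/(3−√5)^2, with t(ρ,u) = (7 − 3√5)u/(2 − (3−√5)u), α = 2(−2+√5)u/(2 + (−3+√5)u), and (df/dw)|_{w=α} = ((2+(−3+√5)u)/(2+(−3+√5)u − 2(−2+√5)u^2))^2. -/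
open Finset Filter Topology Asymptotics

/-- The coefficient `r(ρ,u)` of `(ρ−z)^{1/2}` in the singular expansion of `W(z,u)`. -/
noncomputable def rcoef (u : ℝ) : ℝ :=
  -(2 / (2 - (3 - Real.sqrt 5) * u)) *
    ((2 + (-3 + Real.sqrt 5) * u) /
      ((2 + (-3 + Real.sqrt 5) * u) - 2 * (-2 + Real.sqrt 5) * u ^ 2)) ^ 2 *
    ((7 - 3 * Real.sqrt 5) * u / (2 - (3 - Real.sqrt 5) * u)) *
    Real.sqrt (8 * (3 * Real.sqrt 5 - 5)) / (3 - Real.sqrt 5) ^ 2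


/-!
Write `R(z) = √((z²+z+1)(z²-3z+1))`, so that `S(z) - 1 = (1 - z - z² - R)/(2z²)`. Substituting
this into `W` and clearing denominators gives, with `D(z) = 2(1-zu) - u²(1-z-z²)`,
`W = A(z) - 2uR/D² + 2u³R²/(D²(D + u²R))`, where `A` is `W` at `R = 0`. Since
`(z²+z+1)(z²-3z+1) = (ρ-z)H(z)` with `H(ρ) > 0`, we have `R = √(ρ-z)·√H` and `R² = (ρ-z)H`,
so `W = A(z) + √(ρ-z)·B(z) + (ρ-z)·C(z)` with `A`, `B` smooth and `C` continuous at `ρ`.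
Hence `W = A(ρ) + B(ρ)√(ρ-z) + O(ρ-z)`, and `B(ρ) = -2u√H(ρ)/D(ρ)²` is the stated `r(ρ,u)`.
-/

theorem isBigO_sub_sqrt_expansion {f A B C : ℝ → ℝ} {ρ : ℝ}
    (hA : DifferentiableAt ℝ A ρ) (hB : DifferentiableAt ℝ B ρ) (hC : ContinuousAt C ρ)
    (hf : ∀ᶠ z in 𝓝[<] ρ, f z = A z + √(ρ - z) * B z + (ρ - z) * C z) :
    (fun z => f z - (A ρ + B ρ * √(ρ - z))) =O[𝓝[<] ρ] fun z => ρ - z := by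
  have hle : 𝓝[<] ρ ≤ 𝓝 ρ := nhdsWithin_le_nhds
  have hflip : (fun z => z - ρ) =O[𝓝[<] ρ] fun z => ρ - z :=
    (isBigO_refl (fun z => ρ - z) _).neg_left.congr_left fun z => neg_sub ρ z
  have hA' := (hA.isBigO_sub.mono hle).trans hflip
  have hB' := (hB.isBigO_sub.mono hle).trans hflip
  have hsqrt : (fun z => √(ρ - z)) =O[𝓝[<] ρ] fun _ => (1 : ℝ) :=
    ((continuous_const.sub continuous_id).sqrt.tendsto ρ |>.mono_left hle).isBigO_one ℝ
  have hC' : C =O[𝓝[<] ρ] fun _ => (1 : ℝ) := (hC.tendsto.mono_left hle).isBigO_one ℝ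
  have hBterm : (fun z => √(ρ - z) * (B z - B ρ)) =O[𝓝[<] ρ] fun z => ρ - z := by
    simpa only [one_mul] using hsqrt.mul hB'
  have hCterm : (fun z => (ρ - z) * C z) =O[𝓝[<] ρ] fun z => ρ - z := by
    simpa only [mul_one] using (isBigO_refl (fun z => ρ - z) _).mul hC'
  refine ((hA'.add hBterm).add hCterm).congr' ?_ EventuallyEq.rfl
  filter_upwards [hf] with z hz
  rw [hz]
  ring

lemma sqrt_five_sq : √5 ^ 2 = 5 := Real.sq_sqrt (by norm_num)

lemma two_lt_sqrt_five : 2 < √5 := by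
  nlinarith [sqrt_five_sq, Real.sqrt_nonneg 5]

lemma sqrt_five_lt_three : √5 < 3 := by
  nlinarith [sqrt_five_sq, Real.sqrt_nonneg 5]

lemma rho_pos : 0 < rho := by
  unfold rho; linarith [sqrt_five_lt_three]

lemma one_sub_rho_mul_pos {u : ℝ} (hu : u < 1) : 0 < 1 - rho * u := by
  have : rho < 1 := by unfold rho; linarith [two_lt_sqrt_five]
  nlinarith [rho_pos]

noncomputable def Dfun (u z : ℝ) : ℝ := 2 * (1 - z * u) - u ^ 2 * (1 - z - z ^ 2)

noncomputable def Afun (u z : ℝ) : ℝ :=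
  u * (1 - z - z ^ 2) / ((1 - z * u) * Dfun u z) + z / (1 - z * u)

noncomputable def Hfun (z : ℝ) : ℝ := (z ^ 2 + z + 1) * ((3 + √5) / 2 - z)

noncomputable def Rfun (z : ℝ) : ℝ := √((z ^ 2 + z + 1) * (z ^ 2 - 3 * z + 1))

noncomputable def Bfun (u z : ℝ) : ℝ := -2 * u * √(Hfun z) / Dfun u z ^ 2

noncomputable def Cfun (u z : ℝ) : ℝ :=
  2 * u ^ 3 * Hfun z / (Dfun u z ^ 2 * (Dfun u z + u ^ 2 * Rfun z))

lemma radicand_eq_mul_Hfun (z : ℝ) :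
    (z ^ 2 + z + 1) * (z ^ 2 - 3 * z + 1) = (rho - z) * Hfun z := by
  unfold rho Hfun
  linear_combination ((z ^ 2 + z + 1) / 4) * sqrt_five_sq

lemma Hfun_rho : Hfun rho = 6 * √5 - 10 := by
  unfold rho Hfun
  linear_combination ((√5 - 8) / 4) * sqrt_five_sq

lemma Hfun_pos {z : ℝ} (hz : z ≤ rho) : 0 < Hfun z := by
  have hρ : rho < (3 + √5) / 2 := by unfold rho; linarith [two_lt_sqrt_five]
  unfold Hfun
  have : 0 < z ^ 2 + z + 1 := by nlinarith [sq_nonneg (z + 1 / 2)]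
  exact mul_pos this (by linarith)

lemma Rfun_rho : Rfun rho = 0 := by
  rw [Rfun, radicand_eq_mul_Hfun, sub_self, zero_mul, Real.sqrt_zero]

lemma Dfun_rho (u : ℝ) : Dfun u rho = 2 + (-3 + √5) * u - 2 * (-2 + √5) * u ^ 2 := by
  unfold Dfun rho
  linear_combination (u ^ 2 / 4) * sqrt_five_sq

lemma Dfun_rho_pos {u : ℝ} (hu0 : 0 ≤ u) (hu1 : u ≤ 1) : 0 < Dfun u rho := by
  have h2 := two_lt_sqrt_five
  have h3 := sqrt_five_lt_three
  rw [Dfun_rho]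
  nlinarith [mul_nonneg (sub_nonneg.mpr hu1) (sub_nonneg.mpr h3.le),
    mul_nonneg (mul_nonneg (sub_nonneg.mpr hu1) (by linarith : (0 : ℝ) ≤ 1 + u))
      (by linarith : (0 : ℝ) ≤ 2 * √5 - 4)]

lemma closedForm_eq_expansion {u z r : ℝ} (hz : z ≠ 0) (ha : 1 - z * u ≠ 0)
    (hD : Dfun u z ≠ 0) (hDr : Dfun u z + u ^ 2 * r ≠ 0) :
    u * z ^ 2 * ((1 - z + z ^ 2 - r) / (2 * z ^ 2) - 1) /
        ((1 - z * u) ^ 2 -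
          (1 - z * u) * (z * u) ^ 2 * ((1 - z + z ^ 2 - r) / (2 * z ^ 2) - 1)) +
      z / (1 - z * u)
    = Afun u z - 2 * u * r / Dfun u z ^ 2 +
        2 * u ^ 3 * r ^ 2 / (Dfun u z ^ 2 * (Dfun u z + u ^ 2 * r)) := by
  have hden : (1 - z * u) ^ 2 -
      (1 - z * u) * (z * u) ^ 2 * ((1 - z + z ^ 2 - r) / (2 * z ^ 2) - 1)
      = (1 - z * u) * (Dfun u z + u ^ 2 * r) / 2 := by
    unfold Dfun
    field_simp
    ring
  rw [hden, Afun]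
  set D := Dfun u z with hDdef
  set a := 1 - z * u
  field_simp
  rw [hDdef, Dfun]
  ring

lemma Wfun_eq_expansion {u z : ℝ} (hz0 : 0 < z) (hzρ : z < rho) (ha : 1 - z * u ≠ 0)
    (hD : Dfun u z ≠ 0) (hDr : Dfun u z + u ^ 2 * Rfun z ≠ 0) :
    Wfun z u = Afun u z + √(rho - z) * Bfun u z + (rho - z) * Cfun u z := by
  have hR : Rfun z = √(rho - z) * √(Hfun z) := by
    rw [Rfun, radicand_eq_mul_Hfun, Real.sqrt_mul (by linarith)]
  have hR2 : Rfun z ^ 2 = (rho - z) * Hfun z := by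
    rw [hR, mul_pow, Real.sq_sqrt (by linarith), Real.sq_sqrt (Hfun_pos hzρ.le).le]
  have h := closedForm_eq_expansion hz0.ne' ha hD hDr
  rw [hR2] at h
  rw [Wfun, Sfun, ← Rfun, h, Bfun, Cfun]
  nth_rw 1 [hR]
  ring

lemma eventually_Wfun_eq_expansion {u : ℝ} (ha : 0 < 1 - rho * u) (hD : 0 < Dfun u rho) :
    ∀ᶠ z in 𝓝[<] rho,
      Wfun z u = Afun u z + √(rho - z) * Bfun u z + (rho - z) * Cfun u z := by
  have hle : 𝓝[<] rho ≤ 𝓝 rho := nhdsWithin_le_nhds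
  have hcD : Continuous (Dfun u) := by unfold Dfun; fun_prop
  have hcR : Continuous Rfun := by unfold Rfun; fun_prop
  have hDr : 0 < Dfun u rho + u ^ 2 * Rfun rho := by rw [Rfun_rho, mul_zero, add_zero]; exact hD
  have e0 : ∀ᶠ z in 𝓝 rho, 0 < z := eventually_gt_nhds rho_pos
  have ea : ∀ᶠ z in 𝓝 rho, 0 < 1 - z * u :=
    continuousAt_const.eventually_lt (by fun_prop) ha
  have eD : ∀ᶠ z in 𝓝 rho, 0 < Dfun u z :=
    continuousAt_const.eventually_lt hcD.continuousAt hD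
  have eDr : ∀ᶠ z in 𝓝 rho, 0 < Dfun u z + u ^ 2 * Rfun z :=
    continuousAt_const.eventually_lt (by fun_prop) hDr
  filter_upwards [hle e0, hle ea, hle eD, hle eDr, self_mem_nhdsWithin]
    with z hz0 hza hzD hzDr hzρ
  exact Wfun_eq_expansion hz0 hzρ hza.ne' hzD.ne' hzDr.ne'

lemma differentiableAt_Afun {u : ℝ} (ha : 1 - rho * u ≠ 0) (hD : Dfun u rho ≠ 0) :
    DifferentiableAt ℝ (Afun u) rho := by
  have hcD : DifferentiableAt ℝ (Dfun u) rho := by unfold Dfun; fun_prop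
  unfold Afun
  exact ((differentiableAt_const _).mul (by fun_prop)).div
    ((by fun_prop : DifferentiableAt ℝ (fun z : ℝ => 1 - z * u) rho).mul hcD)
    (mul_ne_zero ha hD) |>.add ((differentiableAt_id).div (by fun_prop) ha)

lemma differentiableAt_Bfun {u : ℝ} (hD : Dfun u rho ≠ 0) :
    DifferentiableAt ℝ (Bfun u) rho := by
  have hcD : DifferentiableAt ℝ (Dfun u) rho := by unfold Dfun; fun_prop
  have hcH : DifferentiableAt ℝ Hfun rho := by unfold Hfun; fun_prop
  unfold Bfun
  exact ((differentiableAt_const _).mul (hcH.sqrt (Hfun_pos le_rfl).ne')).div (hcD.pow 2)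
    (pow_ne_zero 2 hD)

lemma continuousAt_Cfun {u : ℝ} (hD : Dfun u rho ≠ 0) : ContinuousAt (Cfun u) rho := by
  have hcD : Continuous (Dfun u) := by unfold Dfun; fun_prop
  have hcH : Continuous Hfun := by unfold Hfun; fun_prop
  have hcR : Continuous Rfun := by unfold Rfun; fun_prop
  unfold Cfun
  refine ContinuousAt.div (by fun_prop) (by fun_prop) ?_
  rw [Rfun_rho, mul_zero, add_zero]
  exact mul_ne_zero (pow_ne_zero 2 hD) hD

lemma rcoef_eq_Bfun_rho {u : ℝ} (hu : u < 1) (hD : Dfun u rho ≠ 0) : rcoef u = Bfun u rho := by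
  have h2 := two_lt_sqrt_five
  have h3 := sqrt_five_lt_three
  have hsqrt8 : √(8 * (3 * √5 - 5)) = 2 * √(Hfun rho) := by
    rw [Hfun_rho, show 8 * (3 * √5 - 5) = 2 ^ 2 * (6 * √5 - 10) by ring,
      Real.sqrt_mul (by norm_num), Real.sqrt_sq (by norm_num)]
  have hsq : (3 - √5) ^ 2 = 2 * (7 - 3 * √5) := by linear_combination sqrt_five_sq
  have hc : 2 - (3 - √5) * u ≠ 0 := by nlinarith
  have hc' : 2 + (-3 + √5) * u ≠ 0 := by nlinarith
  have h7 : (7 : ℝ) - 3 * √5 ≠ 0 := by nlinarith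
  unfold rcoef Bfun
  rw [hsqrt8, ← Dfun_rho, hsq]
  field_simp
  ring

/-- The singular expansion of `W(z,u)` at `ρ`:
`W(z,u) = C₀(u) + V(ρ,u) + r(ρ,u)·(ρ−z)^{1/2} + O(ρ−z)` as `z → ρ⁻`, with the
explicit coefficient `r(ρ,u)` given by `rcoef`. -/
theorem W_singular_expansion (u : ℝ) (hu0 : 0 < u) (hu1 : u < 1) :
    ∃ C0 : ℝ,
      (fun z : ℝ => Wfun z u -
          (C0 + rho / (1 - rho * u) + rcoef u * Real.sqrt (rho - z)))
        =O[nhdsWithin rho (Set.Iio rho)] (fun z : ℝ => rho - z) := by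
  have ha := one_sub_rho_mul_pos hu1
  have hD := Dfun_rho_pos hu0.le hu1.le
  refine ⟨Afun u rho - rho / (1 - rho * u), ?_⟩
  have h := isBigO_sub_sqrt_expansion (differentiableAt_Afun ha.ne' hD.ne')
    (differentiableAt_Bfun hD.ne') (continuousAt_Cfun hD.ne') (eventually_Wfun_eq_expansion ha hD)
  rw [← rcoef_eq_Bfun_rho hu1 hD.ne'] at h
  convert h using 3
  ring
end
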